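/- arXiv:1910.09482 — 2 statements merged into one kernel-verified Lean document; each statement's English description precedes it below -/
import Mathlib

section
/- Let m ≥ 2 and let G(q) = Σ_{n≥0} sf(n,m) q^n be the generating function of the semi-m-Fibonacci numbers, viewed as a formal power series over ℤ. Then (1 − q^m) · G(q) = (1 + q + q² + ⋯ + q^{m−1} − q^m) · G(q^m), where G(q^m) denotes the power series obtained by substituting q^m for q in G. -/
/-- The semi-`m`-Fibonacci numbers: `sfm m 0 = 1`; `sfm m n = sfm m (n / m)` if
`n > 0` and `m ∣ n`; and `sfm m n = sfm m (n - r) + sfm m (n - m)` if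
`n ≡ r (mod m)` with `0 < r < m`, where terms with negative argument are `0`
(the value for `m ≤ 1` is junk). -/
def sfm (m : ℕ) : ℕ → ℕ
  | 0 => 1
  | n + 1 =>
    if m ≤ 1 then 0
    else if (n + 1) % m = 0 then sfm m ((n + 1) / m)
    else sfm m ((n + 1) - (n + 1) % m) +
      if n + 1 < m then 0 else sfm m ((n + 1) - m)
  termination_by n => n
  decreasing_by
  · exact Nat.div_lt_self (Nat.succ_pos n) (by omega)
  · omega
  · omega

/-!
Comparing coefficients of `q ^ n`: the series `(1 + q + ⋯ + q ^ (m - 1)) · G(q ^ m)` has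
`sf(⌊n / m⌋)` as its `n`-th coefficient, so the identity says
`sf(n) - sf(n - m) = sf(⌊n / m⌋) - [m ∣ n] sf(n / m - 1)`. For `m ∣ n` this is the rule
`sf(n) = sf(n / m)` applied at `n` and `n - m`; otherwise it is the recurrence
`sf(n) = sf(n - r) + sf(n - m)` together with `sf(n - r) = sf(⌊n / m⌋)`.
-/

open PowerSeries

section sfm

variable {m : ℕ}

theorem sfm_of_dvd {n : ℕ} (h : m ∣ n) : sfm m n = sfm m (n / m) := by
  cases n with
  | zero => simp
  | succ n =>
    rcases Nat.lt_or_ge m 2 with hm | hm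
    · interval_cases m <;> simp_all
    · rw [sfm, if_neg (by omega), if_pos (Nat.mod_eq_zero_of_dvd h)]

theorem sfm_of_not_dvd (hm : 0 < m) {n : ℕ} (h : ¬ m ∣ n) :
    sfm m n = sfm m (n / m) + if m ≤ n then sfm m (n - m) else 0 := by
  have hm2 : 2 ≤ m := by
    by_contra! hm1
    exact h (by interval_cases m; exact one_dvd n)
  have hmod : n % m ≠ 0 := fun h0 => h (Nat.dvd_of_mod_eq_zero h0)
  obtain _ | n := n
  · simp at h
  rw [sfm, if_neg (by omega), if_neg hmod, sfm_of_dvd (Nat.dvd_sub_mod (n + 1)),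
    ← Nat.mul_div_self_eq_mod_sub_self, Nat.mul_div_cancel_left _ hm]
  simp only [← not_lt, ite_not]

theorem sfm_sub_sfm_sub_eq_sfm_div_sub (hm : 2 ≤ m) (n : ℕ) :
    (sfm m n : ℤ) - (if m ≤ n then (sfm m (n - m) : ℤ) else 0) =
      sfm m (n / m) - if m ≤ n then (if m ∣ n - m then (sfm m ((n - m) / m) : ℤ) else 0) else 0 := by
  by_cases h : m ∣ n
  · have hsub : m ∣ n - m := Nat.dvd_sub h dvd_rfl
    simp only [sfm_of_dvd h, if_pos hsub, ← sfm_of_dvd hsub]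
  · rw [sfm_of_not_dvd (by omega) h]
    split_ifs with hmn hsub
    · exact absurd ((Nat.dvd_sub_iff_left hmn dvd_rfl).mp hsub) h
    · push_cast; ring
    · simp

end sfm

theorem geomSum_mul_mk_ite {R : Type*} [Semiring R] {m : ℕ} (hm : 0 < m) (f : ℕ → R) :
    (∑ i ∈ Finset.range m, X ^ i) * PowerSeries.mk (fun k => if m ∣ k then f (k / m) else 0) =
      PowerSeries.mk (fun n => f (n / m)) := by
  ext n
  rw [Finset.sum_mul, map_sum, coeff_mk, Finset.sum_eq_single (n % m)]
  · rw [coeff_X_pow_mul', if_pos (Nat.mod_le n m), coeff_mk, if_pos (Nat.dvd_sub_mod n),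
      ← Nat.mul_div_self_eq_mod_sub_self, Nat.mul_div_cancel_left _ hm]
  · intro i hi hne
    rw [coeff_X_pow_mul']
    split_ifs with hin
    · rw [coeff_mk, if_neg]
      intro hdvd
      have hmod : i % m = n % m := (Nat.modEq_iff_dvd' hin).mpr hdvd
      exact hne (by rwa [Nat.mod_eq_of_lt (Finset.mem_range.mp hi)] at hmod)
    · rfl
  · exact fun h => absurd (Finset.mem_range.mpr (Nat.mod_lt n hm)) h

theorem sfm_genFun_eq (m : ℕ) (hm : 2 ≤ m) :
    -- `G` is the generating function of the semi-m-Fibonacci numbers and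
    -- `Gm` is the series obtained from `G` by substituting `q ^ m` for `q`.
    ∀ G Gm : PowerSeries ℤ,
      G = PowerSeries.mk (fun n => (sfm m n : ℤ)) →
      Gm = PowerSeries.mk (fun n => if m ∣ n then (sfm m (n / m) : ℤ) else 0) →
      (1 - X ^ m) * G = ((∑ i ∈ Finset.range m, X ^ i) - X ^ m) * Gm := by
  rintro G Gm rfl rfl
  rw [sub_mul, sub_mul, geomSum_mul_mk_ite (by omega) (fun j => (sfm m j : ℤ))]
  ext n
  simp only [one_mul, map_sub, coeff_X_pow_mul', coeff_mk]
  exact sfm_sub_sfm_sub_eq_sfm_div_sub hm n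
end

section
/- For every even integer j ≥ 0, sf(3j + 4, 3) = sf(3j + 5, 3) and sf(3j + 4, 3) ≡ 0 (mod 2). -/
lemma sfm3_step (n : ℕ) : sfm 3 (n+1) =
    if (n + 1) % 3 = 0 then sfm 3 ((n + 1) / 3)
    else sfm 3 ((n + 1) - (n + 1) % 3) +
      if n + 1 < 3 then 0 else sfm 3 ((n + 1) - 3) := by
  rw [sfm]; norm_num

lemma sfm3_mul (k : ℕ) : sfm 3 (3*(k+1)) = sfm 3 (k+1) := by
  have h := sfm3_step (3*(k+1)-1)
  have e : 3*(k+1)-1+1 = 3*(k+1) := by omega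
  rw [e] at h
  rw [h]
  simp [Nat.mul_mod_right, Nat.mul_div_cancel_left]

lemma sfm3_one (k : ℕ) : sfm 3 (3*(k+1)+1) = sfm 3 (k+1) + sfm 3 (3*k+1) := by
  have h := sfm3_step (3*(k+1))
  have h1 : (3*(k+1)+1) % 3 = 1 := by omega
  rw [h1] at h
  norm_num at h
  rw [if_neg (by omega)] at h
  have e2 : 3*(k+1)+1-3 = 3*k+1 := by omega
  rw [e2, sfm3_mul] at h
  exact h

lemma sfm3_two (k : ℕ) : sfm 3 (3*(k+1)+2) = sfm 3 (k+1) + sfm 3 (3*k+2) := by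
  have h := sfm3_step (3*(k+1)+1)
  have h1 : (3*(k+1)+1+1) % 3 = 2 := by omega
  rw [h1] at h
  norm_num at h
  rw [if_neg (by omega)] at h
  have e1 : 3*(k+1)+1+1-2 = 3*(k+1) := by omega
  have e2 : 3*(k+1)+1+1-3 = 3*k+2 := by omega
  rw [e1, e2, sfm3_mul] at h
  have e3 : 3*(k+1)+2 = 3*(k+1)+1+1 := by omega
  rw [e3]; exact h

lemma sfm3_zero : sfm 3 0 = 1 := by rw [sfm]

lemma sfm3_one_val : sfm 3 1 = 1 := by
  have h := sfm3_step 0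
  norm_num at h
  rw [h, sfm3_zero]

lemma sfm3_two_val : sfm 3 2 = 1 := by
  have h := sfm3_step 1
  norm_num at h
  rw [h, sfm3_zero]

lemma sfm3_main (k : ℕ) :
    (sfm 3 (3*k+1) = sfm 3 (3*k+2)) ∧
    (k % 2 = 1 → sfm 3 (3*k+1) % 2 = 0) ∧
    (k % 2 = 0 → sfm 3 k % 2 = sfm 3 (k+1) % 2) := by
  induction k using Nat.strong_induction_on with
  | _ k ih =>
  refine ⟨?_, ?_, ?_⟩
  · -- E
    match k with
    | 0 => simp [sfm3_one_val, sfm3_two_val]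
    | j+1 => rw [sfm3_one j, sfm3_two j, (ih j (by omega)).1]
  · -- P
    intro hk
    match k with
    | 1 =>
      rw [show 3*1+1 = 3*(0+1)+1 from rfl, sfm3_one 0, sfm3_one_val]
    | j+2 =>
      rw [show 3*(j+2)+1 = 3*((j+1)+1)+1 from by ring, sfm3_one (j+1), sfm3_one j]
      have h1 := (ih (j+1) (by omega)).2.2 (by omega)
      have h2 := (ih j (by omega)).2.1 (by omega)
      omega
  · -- C
    intro hk
    rcases Nat.lt_or_ge k 3 with h3 | h3
    · have h33 : sfm 3 3 = 1 := by
        rw [show (3:ℕ) = 3*(0+1) from rfl, sfm3_mul, sfm3_one_val]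
      interval_cases k
      · rw [sfm3_zero, sfm3_one_val]
      · omega
      · rw [sfm3_two_val, show (2:ℕ)+1 = 3 from rfl, h33]
    · rcases Nat.lt_trichotomy (k % 3) 1 with h | h | h
      · -- k = 3t, t even, t ≥ 1
        obtain ⟨u, rfl⟩ : ∃ u, k = 3*(u+1) := ⟨k/3 - 1, by omega⟩
        rw [sfm3_mul u, sfm3_one u]
        have h2 := (ih u (by omega)).2.1 (by omega)
        omega
      · -- k = 3t+1, t odd
        obtain ⟨t, rfl⟩ : ∃ t, k = 3*t+1 := ⟨k/3, by omega⟩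
        exact congrArg (· % 2) (ih t (by omega)).1
      · -- k = 3t+2, t even
        obtain ⟨u, rfl⟩ : ∃ u, k = 3*(u+1)+2 := ⟨k/3 - 1, by omega⟩
        rw [sfm3_two u,
          show 3*(u+1)+2+1 = 3*((u+1)+1) from by ring, sfm3_mul (u+1)]
        have hC := (ih (u+1) (by omega)).2.2 (by omega)
        have hE := (ih u (by omega)).1
        have hP := (ih u (by omega)).2.1 (by omega)
        omega

theorem sfm_three_cong_even_j (j : ℕ) (hj : Even j) :
    sfm 3 (3 * j + 4) = sfm 3 (3 * j + 5) ∧ sfm 3 (3 * j + 4) % 2 = 0 := by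
  have h := sfm3_main (j+1)
  have hE := h.1
  obtain ⟨m, rfl⟩ := hj
  have hP := h.2.1 (by omega)
  rw [show 3*(m+m+1)+1 = 3*(m+m)+4 from by ring] at hE hP
  rw [show 3*(m+m+1)+2 = 3*(m+m)+5 from by ring] at hE
  exact ⟨hE, hP⟩
end
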